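/- Let α ∈ (0,1) be irrational and let θ ∈ ℝ with θ ∉ 1/2 + αℤ + ℤ and θ − 1/2 irrational. Then there exists N such that for every n ≥ N there exists a pair (m, ℓ) ∈ ℤ² that is θ-minimal at scale q_n. -/

import Mathlib

open Real Filter

/-- Gauss map iterates: `α_0 = α`, `α_{k+1} = {1/α_k}`. -/
noncomputable def gaussMap (a : ℝ) : ℕ → ℝ
  | 0 => a
  | k + 1 => Int.fract (gaussMap a k)⁻¹

/-- Continued fraction partial quotients: `a_k = ⌊1/α_{k-1}⌋` for `k ≥ 1`. -/
noncomputable def cfA (a : ℝ) : ℕ → ℕ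
  | 0 => 0
  | k + 1 => (⌊(gaussMap a k)⁻¹⌋).toNat

/-- Denominators of the continued fraction convergents:
`q_0 = 1`, `q_1 = a_1`, `q_{n+2} = a_{n+2} q_{n+1} + q_n`. -/
noncomputable def cfQ (a : ℝ) : ℕ → ℕ
  | 0 => 1
  | 1 => cfA a 1
  | n + 2 => cfA a (n + 2) * cfQ a (n + 1) + cfQ a n

/-- Distance from `x` to the nearest integer. -/
noncomputable def nint (x : ℝ) : ℝ := |x - round x|

/-- `δ_n = (log ‖q_n(θ-1/2)‖ - log ‖q_n α‖)/q_n`. -/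
noncomputable def deltan (a θ : ℝ) (n : ℕ) : ℝ :=
  (Real.log (nint ((cfQ a n : ℝ) * (θ - 1 / 2))) - Real.log (nint ((cfQ a n : ℝ) * a))) /
    (cfQ a n : ℝ)

/-- `(m, ℓ) ∈ ℤ²` is `θ`-minimal at scale `q_n`. -/
def ThetaMinimal (a θ : ℝ) (n : ℕ) (m ℓ : ℤ) : Prop :=
  (-(cfQ a n : ℝ) / 2 ≤ (m : ℝ) ∧ (m : ℝ) < (cfQ a n : ℝ) / 2) ∧
  |(ℓ : ℝ)| ≤ (Real.exp (deltan a θ n * cfQ a n) + cfQ a n + 1 / 2) / cfQ a n ∧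
  nint (θ - 1 / 2 + ((m : ℝ) + (ℓ : ℝ) * cfQ a n) * a) <
    (1 / 2 + 1 / (2 * cfQ a n)) * nint ((cfQ a n : ℝ) * a) ∧
  ((4 ≤ cfA a (n + 1) →
      ∀ j : ℤ, |(j : ℝ)| ≤ (cfA a (n + 1) : ℝ) / 6 →
        ∀ k : ℤ, |(k : ℝ)| < (cfQ a n : ℝ) →
          nint (θ - 1 / 2 + ((m : ℝ) + (j : ℝ) * cfQ a n) * a) ≤
            20 * nint (θ - 1 / 2 + ((m : ℝ) + (j : ℝ) * cfQ a n + (k : ℝ)) * a)) ∧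
    (cfA a (n + 1) ≤ 3 →
      ∀ k : ℤ, -(cfQ a n : ℝ) / 2 ≤ (k : ℝ) → (k : ℝ) < (cfQ a n : ℝ) / 2 →
        nint (θ - 1 / 2 + (m : ℝ) * a) ≤ 20 * nint (θ - 1 / 2 + (k : ℝ) * a)))

/-!
Fix `n ≥ 1` and write `q = q_n`, `X_n = ‖q_n α‖`, `x = θ - 1/2`. Let `m` minimise `‖x + kα‖`
over the window `-q/2 ≤ k < q/2`; this is condition (4) when `a_{n+1} ≤ 3`. Since `p_n` and
`q_n` are coprime, the window contains a `k` with `q ∣ round (q x) + k p_n`, and for it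
`x + kα ≡ ((q x - round (q x)) + k (q α - p_n)) / q (mod 1)`, so
`‖x + mα‖ ≤ ‖q x‖ / q + X_n / 2`. Adding a suitable multiple `ℓ q_n α` moves the signed residue
of `x + mα` to within `X_n / 2` of an integer, which is (3), and the bound on `‖x + mα‖`
controls `|ℓ|` as in (2). When `a_{n+1} ≥ 4`, the facts `q_n (X_{n-1} + X_n) ≥ 1` and
`a_{n+1} X_n ≤ X_{n-1}` keep `‖x + (m + j q_n) α‖` below `(11/12) X_{n-1}` for
`|j| ≤ a_{n+1}/6`, while the best approximation property `‖kα‖ ≥ X_{n-1}` (`0 < |k| < q_n`)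
keeps every further shift by `k` at distance at least `X_{n-1} / 12` from the integers.
-/

lemma nint_eq_norm (x : ℝ) : nint x = ‖(x : UnitAddCircle)‖ := UnitAddCircle.norm_eq.symm

lemma nint_nonneg (x : ℝ) : 0 ≤ nint x := abs_nonneg _

lemma nint_le_half (x : ℝ) : nint x ≤ 1 / 2 := abs_sub_round x

lemma nint_le_abs_sub_intCast (x : ℝ) (z : ℤ) : nint x ≤ |x - z| := round_le x z

lemma nint_pos {x : ℝ} (hx : Irrational x) : 0 < nint x :=
  abs_pos.2 (sub_ne_zero.2 (hx.ne_int _))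

lemma nint_eq_abs {x : ℝ} (hx : |x| < 1 / 2) : nint x = |x| := by
  obtain ⟨h₁, h₂⟩ := abs_lt.1 hx
  rw [nint, round_eq_zero_iff.2 ⟨h₁.le, h₂⟩, Int.cast_zero, sub_zero]

lemma nint_intCast_add (z : ℤ) (x : ℝ) : nint (z + x) = nint x := by
  rw [nint_eq_norm, nint_eq_norm, AddCircle.coe_add, (AddCircle.coe_eq_zero_iff 1).2 ⟨z, by simp⟩,
    zero_add]

lemma nint_add_le (x y : ℝ) : nint (x + y) ≤ nint x + nint y := by
  simpa only [nint_eq_norm, AddCircle.coe_add] using norm_add_le _ _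

lemma nint_sub_le (x y : ℝ) : nint (x - y) ≤ nint x + nint y := by
  simpa only [nint_eq_norm, AddCircle.coe_sub] using norm_sub_le _ _

lemma nint_intCast_mul_le (j : ℤ) (x : ℝ) : nint (j * x) ≤ |(j : ℝ)| * nint x := by
  simpa only [nint_eq_norm, ← zsmul_eq_mul, AddCircle.coe_zsmul, Int.norm_eq_abs]
    using norm_zsmul_le j (x : UnitAddCircle)

lemma irrational_gaussMap {a : ℝ} (ha : Irrational a) : ∀ k, Irrational (gaussMap a k)
  | 0 => ha
  | k + 1 => (irrational_gaussMap ha k).inv.sub_intCast _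

lemma gaussMap_pos {a : ℝ} (ha : Irrational a) (ha0 : 0 < a) : ∀ k, 0 < gaussMap a k
  | 0 => ha0
  | k + 1 => (Int.fract_nonneg _).lt_of_ne fun h =>
      (irrational_gaussMap ha (k + 1)).ne_int 0 (by rw [Int.cast_zero, h]; rfl)

lemma gaussMap_lt_one {a : ℝ} (ha1 : a < 1) : ∀ k, gaussMap a k < 1
  | 0 => ha1
  | _ + 1 => Int.fract_lt_one _

noncomputable def cfP (a : ℝ) : ℕ → ℤ
  | 0 => 0
  | 1 => 1
  | n + 2 => cfA a (n + 2) * cfP a (n + 1) + cfP a n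

/-- `X_n = α_0 α_1 ⋯ α_n`. For `n ≥ 1` this is `‖q_n α‖` (`nint_cfQ_succ_mul`), but not for
`n = 0` when `α > 1/2`. -/
noncomputable def gaussProd (a : ℝ) (n : ℕ) : ℝ := ∏ k ∈ Finset.range (n + 1), gaussMap a k

lemma gaussProd_zero (a : ℝ) : gaussProd a 0 = a := by simp [gaussProd, gaussMap]

lemma gaussProd_succ (a : ℝ) (n : ℕ) : gaussProd a (n + 1) = gaussProd a n * gaussMap a (n + 1) :=
  Finset.prod_range_succ _ _

lemma gaussProd_pos {a : ℝ} (ha : Irrational a) (ha0 : 0 < a) (n : ℕ) : 0 < gaussProd a n :=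
  Finset.prod_pos fun k _ => gaussMap_pos ha ha0 k

lemma neg_one_pow_sq {R : Type*} [Monoid R] [HasDistribNeg R] (n : ℕ) : ((-1 : R) ^ n) ^ 2 = 1 := by
  rw [← pow_mul, pow_mul', neg_one_sq, one_pow]

lemma cfP_succ_mul_cfQ_sub (a : ℝ) :
    ∀ n, cfP a (n + 1) * cfQ a n - cfP a n * cfQ a (n + 1) = (-1 : ℤ) ^ n
  | 0 => by simp [cfP, cfQ]
  | n + 1 => by
    have ih := cfP_succ_mul_cfQ_sub a n
    simp only [cfP, cfQ] at ih ⊢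
    push_cast
    linear_combination (-1 : ℤ) * ih

lemma isCoprime_cfP_cfQ (a : ℝ) (n : ℕ) : IsCoprime (cfP a n) (cfQ a n) :=
  ⟨-(-1) ^ n * cfQ a (n + 1), (-1) ^ n * cfP a (n + 1), by
    linear_combination (-1 : ℤ) ^ n * cfP_succ_mul_cfQ_sub a n + neg_one_pow_sq (R := ℤ) n⟩

lemma exists_eq_cfQ_combination (a : ℝ) (n : ℕ) (k j : ℤ) :
    ∃ u v : ℤ, k = u * cfQ a n + v * cfQ a (n + 1) ∧ j = u * cfP a n + v * cfP a (n + 1) := by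
  have hdet := cfP_succ_mul_cfQ_sub a n
  refine ⟨(-1) ^ n * (cfP a (n + 1) * k - cfQ a (n + 1) * j),
    (-1) ^ n * (cfQ a n * j - cfP a n * k), ?_, ?_⟩
  · linear_combination -(-1 : ℤ) ^ n * k * hdet - k * neg_one_pow_sq (R := ℤ) n
  · linear_combination -(-1 : ℤ) ^ n * j * hdet - j * neg_one_pow_sq (R := ℤ) n

lemma le_abs_mul_sub_mul {u v : ℤ} (hu : u ≠ 0) (huv : u * v ≤ 0) {X Y : ℝ} (hX : 0 ≤ X)
    (hY : 0 ≤ Y) : X ≤ |u * X - v * Y| := by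
  have huv' : (u : ℝ) * v ≤ 0 := by exact_mod_cast huv
  rcases hu.lt_or_gt with hu | hu
  · have hu' : (u : ℝ) ≤ -1 := by exact_mod_cast Int.le_sub_one_of_lt hu
    have hv : (0 : ℝ) ≤ v := by nlinarith
    rw [abs_of_nonpos (by nlinarith)]
    nlinarith
  · have hu' : (1 : ℝ) ≤ u := by exact_mod_cast hu
    have hv : (v : ℝ) ≤ 0 := by nlinarith
    rw [abs_of_nonneg (by nlinarith)]
    nlinarith

lemma ne_zero_and_mul_nonpos_of_abs_lt {u v q q' : ℤ} (hq : 0 ≤ q) (hk0 : u * q + v * q' ≠ 0)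
    (hk : |u * q + v * q'| < q') : u ≠ 0 ∧ u * v ≤ 0 := by
  have hq' : 0 < q' := (abs_nonneg _).trans_lt hk
  refine ⟨fun hu => ?_, not_lt.1 fun huv => ?_⟩
  · subst hu
    have hv : v ≠ 0 := fun hv => hk0 (by simp [hv])
    rw [zero_mul, zero_add, abs_mul, abs_of_pos hq'] at hk
    nlinarith [Int.one_le_abs hv]
  · rcases (pos_and_pos_or_neg_and_neg_of_mul_pos huv) with ⟨hu, hv⟩ | ⟨hu, hv⟩
    · rw [abs_of_pos (by positivity)] at hk
      nlinarith
    · rw [abs_of_neg (by nlinarith)] at hk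
      nlinarith

section ContinuedFraction

variable {a : ℝ} (ha : Irrational a) (ha0 : 0 < a) (ha1 : a < 1)
include ha ha0 ha1

lemma one_le_cfA (k : ℕ) : 1 ≤ cfA a (k + 1) := by
  have h : (1 : ℝ) < (gaussMap a k)⁻¹ :=
    (one_lt_inv₀ (gaussMap_pos ha ha0 k)).2 (gaussMap_lt_one ha1 k)
  have : (1 : ℤ) ≤ ⌊(gaussMap a k)⁻¹⌋ := Int.le_floor.2 (by exact_mod_cast h.le)
  simp only [cfA]
  omega

lemma cfA_succ_eq_floor (k : ℕ) : (cfA a (k + 1) : ℝ) = ⌊(gaussMap a k)⁻¹⌋ := by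
  have := one_le_cfA ha ha0 ha1 k
  simp only [cfA] at this ⊢
  exact_mod_cast Int.toNat_of_nonneg (by omega)

lemma gaussMap_succ_eq_inv_sub (k : ℕ) :
    gaussMap a (k + 1) = (gaussMap a k)⁻¹ - cfA a (k + 1) := by
  rw [cfA_succ_eq_floor ha ha0 ha1]
  rfl

lemma one_le_cfQ : ∀ n, 1 ≤ cfQ a n
  | 0 => le_rfl
  | 1 => one_le_cfA ha ha0 ha1 0
  | n + 2 => by
    have := one_le_cfQ n
    simp only [cfQ]
    omega

lemma two_le_cfQ (n : ℕ) : 2 ≤ cfQ a (n + 2) := by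
  have h₁ := one_le_cfQ ha ha0 ha1 (n + 1)
  have h₂ := one_le_cfQ ha ha0 ha1 n
  have h₃ := one_le_cfA ha ha0 ha1 (n + 1)
  simp only [cfQ]
  nlinarith

lemma cfQ_le_cfQ_succ : ∀ n, cfQ a n ≤ cfQ a (n + 1)
  | 0 => one_le_cfA ha ha0 ha1 0
  | n + 1 => by
    have h₁ := one_le_cfA ha ha0 ha1 (n + 1)
    simp only [cfQ]
    nlinarith

lemma gaussProd_eq_cfA_mul_add (n : ℕ) :
    gaussProd a n = cfA a (n + 2) * gaussProd a (n + 1) + gaussProd a (n + 2) := by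
  have := (gaussMap_pos ha ha0 (n + 1)).ne'
  rw [gaussProd_succ a (n + 1), gaussMap_succ_eq_inv_sub ha ha0 ha1, gaussProd_succ]
  field_simp
  ring

lemma cfQ_mul_sub_cfP : ∀ n, cfQ a n * a - cfP a n = (-1) ^ n * gaussProd a n
  | 0 => by simp [cfQ, cfP, gaussProd_zero]
  | 1 => by
    have := ha0.ne'
    rw [gaussProd_succ, gaussMap_succ_eq_inv_sub ha ha0 ha1, gaussProd_zero]
    simp only [cfQ, cfP, gaussMap]
    field_simp
    ring
  | n + 2 => by
    have h₀ := cfQ_mul_sub_cfP n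
    have h₁ := cfQ_mul_sub_cfP (n + 1)
    simp only [cfQ, cfP]
    push_cast
    linear_combination (cfA a (n + 2) : ℝ) * h₁ + h₀ +
      (-1) ^ n * gaussProd_eq_cfA_mul_add ha ha0 ha1 n

lemma cfQ_succ_mul_gaussProd_add (n : ℕ) :
    cfQ a (n + 1) * gaussProd a n + cfQ a n * gaussProd a (n + 1) = (1 : ℝ) := by
  have hdet : (cfP a (n + 1) * cfQ a n - cfP a n * cfQ a (n + 1) : ℝ) = (-1) ^ n := by
    exact_mod_cast cfP_succ_mul_cfQ_sub a n
  linear_combination -(-1 : ℝ) ^ n * ((cfQ a (n + 1) : ℝ) * cfQ_mul_sub_cfP ha ha0 ha1 n -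
    (cfQ a n : ℝ) * cfQ_mul_sub_cfP ha ha0 ha1 (n + 1) - hdet) +
    (1 - cfQ a (n + 1) * gaussProd a n - cfQ a n * gaussProd a (n + 1)) * neg_one_pow_sq (R := ℝ) n

lemma one_le_cfQ_succ_mul_gaussProd_add (n : ℕ) :
    1 ≤ (cfQ a (n + 1) : ℝ) * (gaussProd a n + gaussProd a (n + 1)) := by
  have hq : (cfQ a n : ℝ) ≤ cfQ a (n + 1) := by exact_mod_cast cfQ_le_cfQ_succ ha ha0 ha1 n
  nlinarith [cfQ_succ_mul_gaussProd_add ha ha0 ha1 n, gaussProd_pos ha ha0 (n + 1)]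

lemma gaussProd_succ_lt_half (n : ℕ) : gaussProd a (n + 1) < 1 / 2 := by
  have h := cfQ_succ_mul_gaussProd_add ha ha0 ha1 (n + 1)
  have hq₂ : (2 : ℝ) ≤ cfQ a (n + 2) := by exact_mod_cast two_le_cfQ ha ha0 ha1 n
  have hq₁ : (1 : ℝ) ≤ cfQ a (n + 1) := by exact_mod_cast one_le_cfQ ha ha0 ha1 (n + 1)
  nlinarith [gaussProd_pos ha ha0 (n + 1), gaussProd_pos ha ha0 (n + 2)]

lemma abs_cfQ_mul_sub_cfP (n : ℕ) : |cfQ a n * a - cfP a n| = gaussProd a n := by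
  rw [cfQ_mul_sub_cfP ha ha0 ha1, abs_mul, abs_pow, abs_neg, abs_one, one_pow, one_mul,
    abs_of_pos (gaussProd_pos ha ha0 n)]

lemma nint_cfQ_succ_mul (n : ℕ) : nint (cfQ a (n + 1) * a) = gaussProd a (n + 1) := by
  have h := abs_cfQ_mul_sub_cfP ha ha0 ha1 (n + 1)
  rw [← add_sub_cancel (cfP a (n + 1) : ℝ) (cfQ a (n + 1) * a), nint_intCast_add,
    nint_eq_abs (h ▸ gaussProd_succ_lt_half ha ha0 ha1 n), h]

/-- Best approximation by convergents. Writing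
`(k, round (k α)) = u (q_n, p_n) + v (q_{n+1}, p_{n+1})`, the bound `|k| < q_{n+1}` forces
`u ≠ 0` and `u v ≤ 0`, while `q_n α - p_n` and `q_{n+1} α - p_{n+1}` have opposite signs, so the
two contributions to `k α - round (k α)` add up. -/
lemma gaussProd_le_nint_mul (n : ℕ) {k : ℤ} (hk0 : k ≠ 0) (hk : |k| < cfQ a (n + 1)) :
    gaussProd a n ≤ nint (k * a) := by
  obtain ⟨u, v, hk_eq, hj⟩ := exists_eq_cfQ_combination a n k (round ((k : ℝ) * a))
  obtain ⟨hu, huv⟩ :=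
    ne_zero_and_mul_nonpos_of_abs_lt (by positivity) (hk_eq ▸ hk0) (hk_eq ▸ hk)
  have hsplit : (k : ℝ) * a - round ((k : ℝ) * a) =
      (-1) ^ n * (u * gaussProd a n - v * gaussProd a (n + 1)) := by
    rw [hj, hk_eq]
    push_cast
    linear_combination (u : ℝ) * cfQ_mul_sub_cfP ha ha0 ha1 n +
      (v : ℝ) * cfQ_mul_sub_cfP ha ha0 ha1 (n + 1)
  rw [nint, hsplit, abs_mul, abs_pow, abs_neg, abs_one, one_pow, one_mul]
  exact le_abs_mul_sub_mul hu huv (gaussProd_pos ha ha0 n).le (gaussProd_pos ha ha0 _).le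

end ContinuedFraction

/-- The range of `Int.bmod · q`, i.e. the integers `k` with `-q/2 ≤ k < q/2`. -/
noncomputable def window (q : ℕ) : Finset ℤ := Finset.Ico (-((q : ℤ) / 2)) (((q : ℤ) + 1) / 2)

lemma mem_window {q : ℕ} {k : ℤ} : k ∈ window q ↔ -(q : ℝ) / 2 ≤ k ∧ (k : ℝ) < q / 2 := by
  have h₁ : -(q : ℝ) / 2 ≤ k ↔ -(q : ℤ) ≤ 2 * k := by
    rw [← @Int.cast_le ℝ]
    push_cast
    constructor <;> intro h <;> linarith
  have h₂ : (k : ℝ) < q / 2 ↔ 2 * k < (q : ℤ) := by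
    rw [← @Int.cast_lt ℝ]
    push_cast
    constructor <;> intro h <;> linarith
  rw [window, Finset.mem_Ico, h₁, h₂]
  omega

lemma exists_mem_window_dvd_add_mul {q : ℕ} (hq : 0 < q) {p : ℤ} (hpq : IsCoprime p q) (P : ℤ) :
    ∃ m ∈ window q, (q : ℤ) ∣ P + m * p := by
  obtain ⟨u, v, huv⟩ := hpq
  refine ⟨(-P * u).bmod q, Finset.mem_Ico.2 ⟨Int.le_bmod hq, Int.bmod_lt hq⟩, ?_⟩
  have hm : (q : ℤ) ∣ -P * u - (-P * u).bmod q := Int.ModEq.dvd Int.bmod_emod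
  have hsplit : P + (-P * u).bmod q * p = P * v * q - (-P * u - (-P * u).bmod q) * p := by
    linear_combination (-P) * huv
  rw [hsplit]
  exact dvd_sub (dvd_mul_left _ _) (hm.mul_right p)

lemma exists_mem_window_nint_add_mul_le {q : ℕ} (hq : 0 < q) {p : ℤ} (hpq : IsCoprime p q)
    (a x : ℝ) : ∃ m ∈ window q, nint (x + m * a) ≤ nint (q * x) / q + |q * a - p| / 2 := by
  obtain ⟨m, hm, c, hc⟩ := exists_mem_window_dvd_add_mul hq hpq (round (q * x))
  refine ⟨m, hm, ?_⟩
  have hq' : (0 : ℝ) < q := by exact_mod_cast hq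
  have hm' : |(m : ℝ)| ≤ q / 2 :=
    abs_le.2 ⟨by linarith [(mem_window.1 hm).1], (mem_window.1 hm).2.le⟩
  have hc' : (round (q * x) : ℝ) + m * p = q * c := by exact_mod_cast hc
  have hsplit : x + m * a - c = ((q * x - round (q * x)) + m * (q * a - p)) / q := by
    rw [eq_div_iff hq'.ne']
    linear_combination hc'
  calc nint (x + m * a) ≤ |x + m * a - c| := nint_le_abs_sub_intCast _ _
    _ ≤ (nint (q * x) + q / 2 * |q * a - p|) / q := by
      rw [hsplit, abs_div, abs_of_pos hq']
      gcongr
      refine (abs_add_le _ _).trans ?_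
      rw [abs_mul]
      gcongr
      exact le_rfl
    _ = nint (q * x) / q + |q * a - p| / 2 := by
      field_simp

lemma exists_int_abs_add_mul_le (v : ℝ) {e : ℝ} (he : e ≠ 0) :
    ∃ ℓ : ℤ, |v + ℓ * e| ≤ |e| / 2 ∧ |(ℓ : ℝ)| ≤ |v| / |e| + 1 / 2 := by
  refine ⟨-round (v / e), ?_, ?_⟩
  · have hsplit : v + ((-round (v / e) : ℤ) : ℝ) * e = e * (v / e - round (v / e)) := by
      push_cast
      field_simp
      ring
    rw [hsplit, abs_mul]
    nlinarith [abs_sub_round (v / e), abs_nonneg e]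
  · have h := abs_sub_abs_le_abs_sub ((round (v / e) : ℤ) : ℝ) (v / e)
    rw [abs_sub_comm] at h
    rw [Int.cast_neg, abs_neg, ← abs_div]
    linarith [abs_sub_round (v / e)]

lemma exists_int_nint_add_mul_le (x : ℝ) {y : ℝ} (hy : 0 < nint y) :
    ∃ ℓ : ℤ, nint (x + ℓ * y) ≤ nint y / 2 ∧ |(ℓ : ℝ)| ≤ nint x / nint y + 1 / 2 := by
  obtain ⟨ℓ, h₁, h₂⟩ := exists_int_abs_add_mul_le (x - round x) (abs_pos.1 hy)
  refine ⟨ℓ, ?_, h₂⟩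
  calc nint (x + ℓ * y) ≤ |x + ℓ * y - ((round x + ℓ * round y : ℤ) : ℝ)| :=
        nint_le_abs_sub_intCast _ _
    _ = |x - round x + ℓ * (y - round y)| := by
      push_cast
      ring_nf
    _ ≤ nint y / 2 := h₁

section ThetaMinimal

variable {a : ℝ} (ha : Irrational a) (ha0 : 0 < a) (ha1 : a < 1)
include ha ha0 ha1

lemma abs_le_exp_deltan_mul {θ : ℝ} (hθ : Irrational (θ - 1 / 2)) (n : ℕ) {w ℓ : ℤ}
    (hw : nint (θ - 1 / 2 + w * a) ≤
      nint (cfQ a (n + 1) * (θ - 1 / 2)) / cfQ a (n + 1) + gaussProd a (n + 1) / 2)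
    (hℓ : |(ℓ : ℝ)| ≤ nint (θ - 1 / 2 + w * a) / gaussProd a (n + 1) + 1 / 2) :
    |(ℓ : ℝ)| ≤
      (exp (deltan a θ (n + 1) * cfQ a (n + 1)) + cfQ a (n + 1) + 1 / 2) / cfQ a (n + 1) := by
  have hq : (0 : ℝ) < cfQ a (n + 1) := by exact_mod_cast one_le_cfQ ha ha0 ha1 (n + 1)
  have hX := gaussProd_pos ha ha0 (n + 1)
  set q : ℝ := (cfQ a (n + 1) : ℝ)
  set X := gaussProd a (n + 1)
  set t := nint (q * (θ - 1 / 2))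
  have ht : 0 < t :=
    nint_pos (hθ.natCast_mul (Nat.pos_iff_ne_zero.1 (one_le_cfQ ha ha0 ha1 (n + 1))))
  have hexp : exp (deltan a θ (n + 1) * q) = t / X := by
    rw [deltan, nint_cfQ_succ_mul ha ha0 ha1, div_mul_cancel₀ _ hq.ne', exp_sub, exp_log ht,
      exp_log hX]
  have hgap : (t / X + q + 1 / 2) / q - ((t / q + X / 2) / X + 1 / 2) = 1 / (2 * q) := by
    field_simp
    ring
  have hle : nint (θ - 1 / 2 + w * a) / X ≤ (t / q + X / 2) / X := by gcongr
  rw [hexp]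
  linarith [one_div_pos.2 (mul_pos two_pos hq)]

lemma nint_le_gaussProd_div_two_add {x : ℝ} (n : ℕ) {w : ℤ}
    (hw : nint (x + w * a) ≤ nint (cfQ a (n + 1) * x) / cfQ a (n + 1) + gaussProd a (n + 1) / 2) :
    nint (x + w * a) ≤ gaussProd a n / 2 + gaussProd a (n + 1) := by
  have hq : (0 : ℝ) < cfQ a (n + 1) := by exact_mod_cast one_le_cfQ ha ha0 ha1 (n + 1)
  have h : nint (cfQ a (n + 1) * x) / cfQ a (n + 1) ≤
      (gaussProd a n + gaussProd a (n + 1)) / 2 := by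
    rw [div_le_iff₀ hq]
    linarith [nint_le_half (cfQ a (n + 1) * x), one_le_cfQ_succ_mul_gaussProd_add ha ha0 ha1 n]
  linarith

lemma nint_le_twenty_mul (n : ℕ) {x : ℝ} {w : ℤ}
    (hw : nint (x + w * a) ≤ gaussProd a n / 2 + gaussProd a (n + 1))
    (hA : 4 ≤ cfA a (n + 2)) {j : ℤ} (hj : |(j : ℝ)| ≤ cfA a (n + 2) / 6) {k : ℤ}
    (hk : |(k : ℝ)| < cfQ a (n + 1)) :
    nint (x + (w + j * cfQ a (n + 1)) * a) ≤ 20 * nint (x + (w + j * cfQ a (n + 1) + k) * a) := by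
  have hrec := gaussProd_eq_cfA_mul_add ha ha0 ha1 n
  have hA' : (4 : ℝ) ≤ cfA a (n + 2) := by exact_mod_cast hA
  have hX := gaussProd_pos ha ha0 (n + 1)
  have hX₂ := gaussProd_pos ha ha0 (n + 2)
  have hqa := nint_cfQ_succ_mul ha ha0 ha1 n
  have hk' : |k| < (cfQ a (n + 1) : ℤ) := by exact_mod_cast hk
  set q : ℝ := (cfQ a (n + 1) : ℝ)
  set X := gaussProd a (n + 1)
  set X' := gaussProd a n
  have hjX : |(j : ℝ)| * X ≤ X' / 6 := by nlinarith
  have h4X : 4 * X ≤ X' := by nlinarith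
  have hupper : nint (x + (w + j * q) * a) ≤ X' / 2 + X + X' / 6 :=
    calc nint (x + (w + j * q) * a) = nint ((x + w * a) + j * (q * a)) := by ring_nf
      _ ≤ nint (x + w * a) + |(j : ℝ)| * X := by
        rw [← hqa]
        exact (nint_add_le _ _).trans (by gcongr; exact nint_intCast_mul_le _ _)
      _ ≤ X' / 2 + X + X' / 6 := by linarith
  rcases eq_or_ne k 0 with rfl | hk0
  · rw [Int.cast_zero, add_zero]
    linarith [nint_nonneg (x + (w + j * q) * a)]
  have hlower : X' ≤ nint (x + (w + j * q + k) * a) + nint (x + (w + j * q) * a) :=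
    calc X' ≤ nint (k * a) := gaussProd_le_nint_mul ha ha0 ha1 n hk0 hk'
      _ = nint ((x + (w + j * q + k) * a) - (x + (w + j * q) * a)) := by ring_nf
      _ ≤ _ := nint_sub_le _ _
  linarith

end ThetaMinimal

theorem stmt17_general (a θ : ℝ) (ha : Irrational a) (ha0 : 0 < a) (ha1 : a < 1)
    (hθ2 : Irrational (θ - 1 / 2)) :
    ∃ N : ℕ, ∀ n : ℕ, N ≤ n → ∃ m ℓ : ℤ, ThetaMinimal a θ n m ℓ := by
  refine ⟨1, fun n hn => ?_⟩
  obtain ⟨n, rfl⟩ := Nat.exists_eq_add_of_le' hn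
  obtain ⟨m₀, hm₀, hm₀_le⟩ := exists_mem_window_nint_add_mul_le (one_le_cfQ ha ha0 ha1 (n + 1))
    (isCoprime_cfP_cfQ a (n + 1)) a (θ - 1 / 2)
  obtain ⟨w, hw, hw_min⟩ := (window (cfQ a (n + 1))).exists_min_image
    (fun k : ℤ => nint (θ - 1 / 2 + k * a)) ⟨m₀, hm₀⟩
  have hw_le : nint (θ - 1 / 2 + w * a) ≤
      nint (cfQ a (n + 1) * (θ - 1 / 2)) / cfQ a (n + 1) + gaussProd a (n + 1) / 2 := by
    rw [← abs_cfQ_mul_sub_cfP ha ha0 ha1]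
    exact (hw_min m₀ hm₀).trans hm₀_le
  have hw_le' := nint_le_gaussProd_div_two_add ha ha0 ha1 n hw_le
  have hX := gaussProd_pos ha ha0 (n + 1)
  obtain ⟨ℓ, hℓ_nint, hℓ_abs⟩ := exists_int_nint_add_mul_le (θ - 1 / 2 + w * a)
    ((nint_cfQ_succ_mul ha ha0 ha1 n).symm ▸ hX)
  rw [nint_cfQ_succ_mul ha ha0 ha1] at hℓ_nint hℓ_abs
  refine ⟨w, ℓ, mem_window.1 hw, abs_le_exp_deltan_mul ha ha0 ha1 hθ2 n hw_le hℓ_abs, ?_,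
    fun hA j hj k hk => nint_le_twenty_mul ha ha0 ha1 n hw_le' hA hj hk, fun _ k hk₁ hk₂ => ?_⟩
  · have hq : (0 : ℝ) < 1 / (2 * cfQ a (n + 1)) :=
      one_div_pos.2 (mul_pos two_pos (by exact_mod_cast one_le_cfQ ha ha0 ha1 (n + 1)))
    rw [nint_cfQ_succ_mul ha ha0 ha1]
    calc _ = nint (θ - 1 / 2 + w * a + ℓ * (cfQ a (n + 1) * a)) := by ring_nf
      _ < _ := by nlinarith
  · exact (hw_min k (mem_window.2 ⟨hk₁, hk₂⟩)).trans
      (le_mul_of_one_le_left (nint_nonneg _) (by norm_num))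

/-- for all sufficiently large `n` there exists a `θ`-minimal pair
`(m, ℓ)` at scale `q_n`. -/
theorem stmt17 (a θ : ℝ) (ha : Irrational a) (ha0 : 0 < a) (ha1 : a < 1)
    (hθ1 : ∀ k l : ℤ, θ ≠ 1 / 2 + k * a + l) (hθ2 : Irrational (θ - 1 / 2)) :
    ∃ N : ℕ, ∀ n : ℕ, N ≤ n → ∃ m ℓ : ℤ, ThetaMinimal a θ n m ℓ :=
  stmt17_general a θ ha ha0 ha1 hθ2
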